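/- arXiv:cs/0702087 — 7 statements merged into one kernel-verified Lean document; each statement's English description precedes it below -/
import Mathlib

section
/- Let I be a finite index set and let a, b : I → E be families of unit vectors. Then the integral over the unit sphere S², with respect to the normalized spherical measure σ/(4π), of the function v ↦ card{i ∈ I : ⟨v, a i⟩ · ⟨v, b i⟩ < 0} equals (1/π) · Σ_{i ∈ I} arccos⟨a i, b i⟩. (This is the classical formula for the expected number of silhouette edges of a polyhedron viewed from a uniformly random direction at infinity: each edge with exterior dihedral angle θ_e lies on the silhouette with probability θ_e/π.) -/
open MeasureTheory Real RealInnerProductSpace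

/-!
The count is a sum of indicators, so its mean is the sum over the edges of the normalized measure
of the pair of antipodal lunes `{v ∈ S² | ⟪v, a⟫ ⟪v, b⟫ < 0}`. That measure is three times the
volume of the cone over these lunes inside the unit ball. The vectors `a + b` and `a - b` are
orthogonal; in an orthonormal basis along them `⟪x, a⟫ ⟪x, b⟫` is a quadratic form in two
coordinates only, so the cone is a cylinder over a planar double wedge, cut by the ball. Each
horizontal slice at height `z` is the double wedge inside a disk of squared radius `1 - z²`, whose
area `θ (1 - z²)` (with `θ = arccos ⟪a, b⟫`) is read off in polar coordinates; integrating over `z`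
gives `4θ/3`.
-/

open Set
open scoped Pointwise

local notation "E3" => EuclideanSpace ℝ (Fin 3)

theorem cos_lt_cos_iff_mem_Ioo {α x : ℝ} (hα : α ∈ Icc 0 π) (hx : x ∈ Ico 0 (2 * π)) :
    cos x < cos α ↔ x ∈ Ioo α (2 * π - α) := by
  obtain ⟨hα0, hαπ⟩ := hα
  obtain ⟨hx0, hx2π⟩ := hx
  rcases le_total x π with hxπ | hπx
  · rw [strictAntiOn_cos.lt_iff_gt ⟨hx0, hxπ⟩ ⟨hα0, hαπ⟩, mem_Ioo]
    constructor
    · intro h; exact ⟨h, by linarith⟩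
    · exact And.left
  · rw [← cos_two_pi_sub, strictAntiOn_cos.lt_iff_gt ⟨by linarith, by linarith⟩ ⟨hα0, hαπ⟩,
      mem_Ioo]
    constructor
    · intro h; exact ⟨by linarith, by linarith⟩
    · intro h; linarith [h.2]

theorem cos_two_mul_lt_cos_inter_Ioo {α : ℝ} (hα : α ∈ Icc 0 π) :
    {φ | cos (2 * φ) < cos α} ∩ Ioo (-π) π
      = Ioo (α / 2) (π - α / 2) ∪ Ioo (-(π - α / 2)) (-(α / 2)) := by
  ext φ
  have hπ := pi_pos
  by_cases hφ : φ ∈ Ioo (-π) π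
  · have h2φ : 2 * |φ| ∈ Ico 0 (2 * π) :=
      ⟨by positivity, by linarith [abs_lt.mpr ⟨hφ.1, hφ.2⟩]⟩
    have hcos : cos (2 * φ) = cos (2 * |φ|) := by
      rw [← cos_abs (2 * φ), abs_mul, abs_two]
    simp only [mem_inter_iff, mem_ofPred_eq, hφ, and_true, hcos,
      cos_lt_cos_iff_mem_Ioo hα h2φ, mem_Ioo, mem_union]
    rcases abs_cases φ with ⟨h, _⟩ | ⟨h, _⟩ <;> rw [h] <;> grind
  · simp only [mem_inter_iff, hφ, and_false, false_iff, mem_union, mem_Ioo]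
    grind

theorem volume_cos_two_mul_lt_cos_inter_Ioo {α : ℝ} (hα : α ∈ Icc 0 π) :
    volume ({φ | cos (2 * φ) < cos α} ∩ Ioo (-π) π) = ENNReal.ofReal (2 * (π - α)) := by
  obtain ⟨hα0, hαπ⟩ := hα
  have hdisj : Disjoint (Ioo (α / 2) (π - α / 2)) (Ioo (-(π - α / 2)) (-(α / 2))) :=
    disjoint_left.mpr fun φ h h' => by linarith [h.1, h'.2]
  rw [cos_two_mul_lt_cos_inter_Ioo ⟨hα0, hαπ⟩, measure_union hdisj measurableSet_Ioo,
    volume_Ioo, volume_Ioo, ← ENNReal.ofReal_add (by linarith) (by linarith)]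
  ring_nf

theorem setLIntegral_Ioo_zero_ofReal {R : ℝ} (hR : 0 ≤ R) :
    ∫⁻ r in Ioo 0 R, ENNReal.ofReal r = ENNReal.ofReal (R ^ 2 / 2) := by
  rw [← ofReal_integral_eq_lintegral_ofReal, ← integral_Ioc_eq_integral_Ioo,
    ← intervalIntegral.integral_of_le hR, integral_id]
  · ring_nf
  · exact continuous_id.integrableOn_Icc.mono_set Ioo_subset_Icc_self
  · filter_upwards [ae_restrict_mem measurableSet_Ioo] with r hr using hr.1.le

theorem volume_disk_inter_eq_of_polar {C : Set (ℝ × ℝ)} {A : Set ℝ} (hC : MeasurableSet C)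
    (hA : MeasurableSet A) (hCA : ∀ r > 0, ∀ φ ∈ Ioo (-π) π, (r * cos φ, r * sin φ) ∈ C ↔ φ ∈ A)
    (ρ : ℝ) :
    volume {p : ℝ × ℝ | p.1 ^ 2 + p.2 ^ 2 < ρ ∧ p ∈ C}
      = ENNReal.ofReal (ρ / 2) * volume (A ∩ Ioo (-π) π) := by
  set T := {p : ℝ × ℝ | p.1 ^ 2 + p.2 ^ 2 < ρ ∧ p ∈ C}
  have hT : MeasurableSet T :=
    (measurableSet_lt (f := fun p : ℝ × ℝ ↦ p.1 ^ 2 + p.2 ^ 2) (by fun_prop)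
      measurable_const).inter hC
  have hpolar : EqOn (fun p ↦ ENNReal.ofReal p.1 • T.indicator 1 (polarCoord.symm p))
      ((Ioo 0 √ρ ×ˢ A).indicator fun p ↦ ENNReal.ofReal p.1) polarCoord.target := by
    rintro ⟨r, φ⟩ ⟨hr, hφ⟩
    have hr : 0 < r := hr
    have hnorm : (r * cos φ) ^ 2 + (r * sin φ) ^ 2 = r ^ 2 := by
      linear_combination r ^ 2 * sin_sq_add_cos_sq φ
    have hmem : (r * cos φ, r * sin φ) ∈ T ↔ (r, φ) ∈ Ioo 0 √ρ ×ˢ A := by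
      simp only [T, mem_ofPred_eq, hnorm, hCA r hr φ hφ, mem_prod, mem_Ioo, hr, true_and,
        lt_sqrt hr.le]
    by_cases h : (r, φ) ∈ Ioo 0 √ρ ×ˢ A
    · simp [polarCoord_symm_apply, indicator_of_mem h, indicator_of_mem (hmem.mpr h)]
    · simp [polarCoord_symm_apply, indicator_of_notMem h, indicator_of_notMem (mt hmem.mp h)]
  calc volume T = ∫⁻ p, T.indicator 1 p := (lintegral_indicator_one hT).symm
    _ = ∫⁻ p in polarCoord.target, ENNReal.ofReal p.1 • T.indicator 1 (polarCoord.symm p) :=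
      (lintegral_comp_polarCoord_symm _).symm
    _ = ∫⁻ p in Ioo 0 √ρ ×ˢ (A ∩ Ioo (-π) π), ENNReal.ofReal p.1 := by
      rw [setLIntegral_congr_fun polarCoord.open_target.measurableSet hpolar,
        lintegral_indicator (measurableSet_Ioo.prod hA), Measure.restrict_restrict
          (measurableSet_Ioo.prod hA), polarCoord_target, prod_inter_prod,
        inter_eq_left.mpr Ioo_subset_Ioi_self]
    _ = (∫⁻ r in Ioo 0 √ρ, ENNReal.ofReal r) * volume (A ∩ Ioo (-π) π) := by
      rw [Measure.volume_eq_prod, ← Measure.prod_restrict]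
      simpa using lintegral_prod_mul (f := ENNReal.ofReal) (g := 1)
        (μ := volume.restrict (Ioo 0 √ρ)) (ν := volume.restrict (A ∩ Ioo (-π) π)) (by fun_prop)
        aemeasurable_const
    _ = ENNReal.ofReal (ρ / 2) * volume (A ∩ Ioo (-π) π) := by
      rw [setLIntegral_Ioo_zero_ofReal (sqrt_nonneg ρ)]
      rcases le_total 0 ρ with hρ | hρ
      · rw [sq_sqrt hρ]
      · have hρ2 : ρ / 2 ≤ 0 := by linarith
        simp [sqrt_eq_zero'.mpr hρ, ENNReal.ofReal_of_nonpos hρ2]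

/-- In polar coordinates `p = (r cos φ, r sin φ)` the defining form is `r² (cos 2φ + t)`. -/
def doubleWedge (t : ℝ) : Set (ℝ × ℝ) := {p | p.1 ^ 2 - p.2 ^ 2 + t * (p.1 ^ 2 + p.2 ^ 2) < 0}

theorem measurableSet_doubleWedge (t : ℝ) : MeasurableSet (doubleWedge t) :=
  measurableSet_lt (by fun_prop) measurable_const

theorem volume_disk_inter_doubleWedge {t : ℝ} (ht : t ∈ Icc (-1) 1) (ρ : ℝ) :
    volume {p : ℝ × ℝ | p.1 ^ 2 + p.2 ^ 2 < ρ ∧ p ∈ doubleWedge t}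
      = ENNReal.ofReal (arccos t * ρ) := by
  have hpolar : ∀ r > 0, ∀ φ ∈ Ioo (-π) π,
      (r * cos φ, r * sin φ) ∈ doubleWedge t ↔ φ ∈ {φ | cos (2 * φ) < cos (arccos (-t))} := by
    intro r hr φ _
    have hform : (r * cos φ) ^ 2 - (r * sin φ) ^ 2 + t * ((r * cos φ) ^ 2 + (r * sin φ) ^ 2)
        = r ^ 2 * (cos (2 * φ) + t) := by
      rw [cos_two_mul]; linear_combination (t - 1) * r ^ 2 * sin_sq_add_cos_sq φ
    rw [mem_ofPred_eq, cos_arccos (by linarith [ht.2]) (by linarith [ht.1]), doubleWedge,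
      mem_ofPred_eq, hform]
    constructor <;> intro h <;> nlinarith [pow_pos hr 2]
  rw [volume_disk_inter_eq_of_polar (measurableSet_doubleWedge t)
    (measurableSet_lt (by fun_prop) measurable_const) hpolar,
    volume_cos_two_mul_lt_cos_inter_Ioo ⟨arccos_nonneg _, arccos_le_pi _⟩, arccos_neg,
    ← ENNReal.ofReal_mul' (by linarith [arccos_nonneg t])]
  ring_nf

def ballCylinder (C : Set (ℝ × ℝ)) : Set (ℝ × ℝ × ℝ) :=
  {y | y.1 ^ 2 + (y.2.1 ^ 2 + y.2.2 ^ 2) < 1 ∧ y.2 ∈ C}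

theorem MeasurableSet.ballCylinder {C : Set (ℝ × ℝ)} (hC : MeasurableSet C) :
    MeasurableSet (ballCylinder C) :=
  (measurableSet_lt (f := fun y : ℝ × ℝ × ℝ ↦ y.1 ^ 2 + (y.2.1 ^ 2 + y.2.2 ^ 2)) (by fun_prop)
    measurable_const).inter (measurable_snd hC)

theorem volume_ballCylinder {C : Set (ℝ × ℝ)} (hC : MeasurableSet C) {κ : ℝ} (hκ : 0 ≤ κ)
    (hCκ : ∀ ρ, volume {p : ℝ × ℝ | p.1 ^ 2 + p.2 ^ 2 < ρ ∧ p ∈ C} = ENNReal.ofReal (κ * ρ)) :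
    volume (ballCylinder C) = ENNReal.ofReal (4 / 3 * κ) := by
  have hslice : ∀ z : ℝ, Prod.mk z ⁻¹' ballCylinder C
      = {p : ℝ × ℝ | p.1 ^ 2 + p.2 ^ 2 < 1 - z ^ 2 ∧ p ∈ C} := by
    intro z; ext p; simp only [ballCylinder, mem_preimage, mem_ofPred_eq, lt_sub_iff_add_lt']
  have hsupp : (fun z : ℝ ↦ ENNReal.ofReal (κ * (1 - z ^ 2))).support ⊆ Icc (-1) 1 := by
    intro z hz
    rw [Function.mem_support, ne_eq, ENNReal.ofReal_eq_zero, not_le] at hz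
    have : 0 < 1 - z ^ 2 := pos_of_mul_pos_right hz hκ
    constructor <;> nlinarith
  rw [Measure.volume_eq_prod, Measure.prod_apply hC.ballCylinder]
  simp only [hslice, hCκ]
  rw [← setLIntegral_eq_of_support_subset hsupp, ← ofReal_integral_eq_lintegral_ofReal,
    integral_Icc_eq_integral_Ioc, ← intervalIntegral.integral_of_le (by norm_num)]
  · simp only [intervalIntegral.integral_const_mul, intervalIntegrable_const,
      intervalIntegral.intervalIntegrable_pow, intervalIntegral.integral_sub,
      intervalIntegral.integral_const, smul_eq_mul, mul_one, integral_pow]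
    congr 1
    norm_num
    ring
  · exact (continuous_const.mul (continuous_const.sub (continuous_pow 2))).integrableOn_Icc
  · filter_upwards [ae_restrict_mem measurableSet_Icc] with z hz
    exact mul_nonneg hκ (by nlinarith [hz.1, hz.2])

theorem exists_orthonormalBasis_eq_norm_smul {E : Type*} [NormedAddCommGroup E]
    [InnerProductSpace ℝ E] [FiniteDimensional ℝ E] {ι : Type*} [Fintype ι]
    (hcard : Module.finrank ℝ E = Fintype.card ι) {v : ι → E}
    (hv : Pairwise fun i j ↦ ⟪v i, v j⟫ = 0) :
    ∃ B : OrthonormalBasis ι ℝ E, ∀ i, v i = ‖v i‖ • B i := by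
  set u : ι → E := fun i ↦ ‖v i‖⁻¹ • v i
  have hu : Orthonormal ℝ ({i | v i ≠ 0}.domRestrict u) := by
    refine ⟨fun i ↦ norm_smul_inv_norm i.2, fun i j hij ↦ ?_⟩
    simp only [domRestrict_apply, u, real_inner_smul_left, real_inner_smul_right,
      hv (Subtype.coe_ne_coe.mpr hij), mul_zero]
  obtain ⟨B, hB⟩ := hu.exists_orthonormalBasis_extension_of_card_eq hcard
  refine ⟨B, fun i ↦ ?_⟩
  by_cases hi : v i = 0
  · simp [hi]
  · rw [hB i hi, smul_inv_smul₀ (norm_ne_zero_iff.mpr hi)]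

theorem measurePreserving_euclideanSpace_fin_three :
    MeasurePreserving (fun y : E3 ↦ (y 2, y 0, y 1)) := by
  have hfinTwo : MeasurePreserving (Prod.map id MeasurableEquiv.finTwoArrow)
      (volume : Measure (ℝ × (Fin 2 → ℝ))) volume :=
    (MeasurePreserving.id volume).prod (volume_preserving_finTwoArrow ℝ)
  exact (hfinTwo.comp (volume_preserving_piFinSuccAbove (fun _ : Fin 3 ↦ ℝ) 2)).comp
    (EuclideanSpace.volume_preserving_symm_measurableEquiv_toLp (Fin 3))

theorem Ioo_smul_sphere_inter_eq_ball_inter {E : Type*} [NormedAddCommGroup E]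
    [NormedSpace ℝ E] {K : Set E} (hK0 : (0 : E) ∉ K)
    (hKsmul : ∀ r : ℝ, 0 < r → ∀ x ∈ K, r • x ∈ K) :
    Ioo (0 : ℝ) 1 • (Metric.sphere (0 : E) 1 ∩ K) = Metric.ball 0 1 ∩ K := by
  ext x
  constructor
  · rintro ⟨r, ⟨hr0, hr1⟩, y, ⟨hy, hyK⟩, rfl⟩
    rw [mem_sphere_zero_iff_norm] at hy
    refine ⟨?_, hKsmul r hr0 y hyK⟩
    rwa [mem_ball_zero_iff, norm_smul, hy, mul_one, norm_of_nonneg hr0.le]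
  · rintro ⟨hx, hxK⟩
    have hx0 : x ≠ 0 := fun h ↦ hK0 (h ▸ hxK)
    have hnx : 0 < ‖x‖ := norm_pos_iff.mpr hx0
    refine ⟨‖x‖, ⟨hnx, mem_ball_zero_iff.mp hx⟩, ‖x‖⁻¹ • x,
      ⟨mem_sphere_zero_iff_norm.mpr (norm_smul_inv_norm hx0), hKsmul _ (inv_pos.mpr hnx) x hxK⟩,
      smul_inv_smul₀ hnx.ne' x⟩

theorem Measure.toSphere_preimage_cone {E : Type*} [NormedAddCommGroup E] [NormedSpace ℝ E]
    [MeasurableSpace E] [BorelSpace E] (μ : Measure E) {K : Set E} (hK : MeasurableSet K)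
    (hK0 : (0 : E) ∉ K)
    (hKsmul : ∀ r : ℝ, 0 < r → ∀ x ∈ K, r • x ∈ K) :
    μ.toSphere ((↑) ⁻¹' K) = Module.finrank ℝ E * μ (Metric.ball 0 1 ∩ K) := by
  rw [μ.toSphere_apply' (measurable_subtype_coe hK), Subtype.image_preimage_coe,
    Ioo_smul_sphere_inter_eq_ball_inter hK0 hKsmul]

section silhouetteCone

variable {E : Type*} [NormedAddCommGroup E] [InnerProductSpace ℝ E]

def silhouetteCone (a b : E) : Set E := {x | ⟪x, a⟫ * ⟪x, b⟫ < 0}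

theorem measurableSet_silhouetteCone [MeasurableSpace E] [OpensMeasurableSpace E] (a b : E) :
    MeasurableSet (silhouetteCone a b) :=
  measurableSet_lt (by fun_prop) measurable_const

theorem zero_notMem_silhouetteCone (a b : E) : (0 : E) ∉ silhouetteCone a b := by
  simp [silhouetteCone]

theorem smul_mem_silhouetteCone {a b x : E} (hx : x ∈ silhouetteCone a b) {r : ℝ} (hr : 0 < r) :
    r • x ∈ silhouetteCone a b := by
  have hscale : ⟪r • x, a⟫ * ⟪r • x, b⟫ = r ^ 2 * (⟪x, a⟫ * ⟪x, b⟫) := by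
    rw [real_inner_smul_left, real_inner_smul_left]; ring
  change ⟪r • x, a⟫ * ⟪r • x, b⟫ < 0
  rw [hscale]
  exact mul_neg_of_pos_of_neg (pow_pos hr 2) hx

end silhouetteCone

theorem volume_ball_inter_silhouetteCone {a b : E3} (ha : ‖a‖ = 1) (hb : ‖b‖ = 1) :
    volume (Metric.ball 0 1 ∩ silhouetteCone a b)
      = ENNReal.ofReal (4 / 3 * arccos ⟪a, b⟫) := by
  have hab : ⟪a + b, a - b⟫ = 0 := (real_inner_add_sub_eq_zero_iff a b).mpr (ha.trans hb.symm)
  obtain ⟨B, hB⟩ := exists_orthonormalBasis_eq_norm_smul (v := ![a + b, a - b, 0])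
    (by simp) (by
      intro i j hij
      fin_cases i <;> fin_cases j <;> simp_all [real_inner_comm (a - b)])
  have hB0 : a + b = ‖a + b‖ • B 0 := hB 0
  have hB1 : a - b = ‖a - b‖ • B 1 := hB 1
  set t := ⟪a, b⟫
  have hadd : ‖a + b‖ ^ 2 = 2 + 2 * t := by rw [norm_add_sq_real, ha, hb]; ring
  have hsub : ‖a - b‖ ^ 2 = 2 - 2 * t := by rw [norm_sub_sq_real, ha, hb]; ring
  have hpre : Metric.ball 0 1 ∩ silhouetteCone a b
      = (fun x ↦ (B.repr x 2, B.repr x 0, B.repr x 1)) ⁻¹' ballCylinder (doubleWedge t) := by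
    ext x
    have hnorm : ‖x‖ ^ 2 = B.repr x 2 ^ 2 + (B.repr x 0 ^ 2 + B.repr x 1 ^ 2) := by
      rw [← B.sum_sq_norm_inner_right x, Fin.sum_univ_three]
      simp only [B.repr_apply_apply, norm_eq_abs, sq_abs]
      ring
    have hsign : ⟪x, a⟫ * ⟪x, b⟫ < 0 ↔
        B.repr x 0 ^ 2 - B.repr x 1 ^ 2 + t * (B.repr x 0 ^ 2 + B.repr x 1 ^ 2) < 0 := by
      have h4 : 4 * (⟪x, a⟫ * ⟪x, b⟫) = ⟪x, a + b⟫ ^ 2 - ⟪x, a - b⟫ ^ 2 := by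
        rw [inner_add_right, inner_sub_right]; ring
      rw [hB0, hB1, real_inner_smul_right, real_inner_smul_right, mul_pow, mul_pow, hadd, hsub,
        real_inner_comm (B 0), real_inner_comm (B 1), ← B.repr_apply_apply,
        ← B.repr_apply_apply] at h4
      constructor <;> intro h <;> linarith
    simp only [mem_inter_iff, mem_ball_zero_iff, silhouetteCone, mem_ofPred_eq, mem_preimage,
      ballCylinder, doubleWedge, ← hnorm, ← sq_lt_one_iff₀ (norm_nonneg x), hsign]
  have hf : MeasurePreserving (fun x ↦ (B.repr x 2, B.repr x 0, B.repr x 1)) :=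
    measurePreserving_euclideanSpace_fin_three.comp B.measurePreserving_repr
  rw [hpre, hf.measure_preimage (measurableSet_doubleWedge t).ballCylinder.nullMeasurableSet,
    volume_ballCylinder (measurableSet_doubleWedge t) (arccos_nonneg t)
    (volume_disk_inter_doubleWedge (real_inner_mem_Icc_of_norm_eq_one ha hb))]

theorem toSphere_silhouetteCone {a b : E3} (ha : ‖a‖ = 1) (hb : ‖b‖ = 1) :
    (volume : Measure E3).toSphere ((↑) ⁻¹' silhouetteCone a b)
      = ENNReal.ofReal (4 * arccos ⟪a, b⟫) := by
  rw [Measure.toSphere_preimage_cone volume (measurableSet_silhouetteCone a b)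
      (zero_notMem_silhouetteCone a b) fun r hr x hx ↦ smul_mem_silhouetteCone hx hr,
    finrank_euclideanSpace_fin, volume_ball_inter_silhouetteCone ha hb,
    show ((3 : ℕ) : ENNReal) = ENNReal.ofReal 3 by simp, ← ENNReal.ofReal_mul (by norm_num)]
  ring_nf

theorem integral_natCard_mem_eq_sum {Ω ι : Type*} [MeasurableSpace Ω] [Fintype ι]
    (μ : Measure Ω) [IsFiniteMeasure μ] {S : ι → Set Ω} (hS : ∀ i, MeasurableSet (S i)) :
    ∫ ω, (Nat.card {i // ω ∈ S i} : ℝ) ∂μ = ∑ i, μ.real (S i) := by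
  classical
  have hcard : ∀ ω, (Nat.card {i // ω ∈ S i} : ℝ) = ∑ i, (S i).indicator 1 ω := by
    intro ω
    simp only [Nat.card_eq_fintype_card, Fintype.card_subtype, Finset.card_filter, Nat.cast_sum,
      Nat.cast_ite, Nat.cast_one, Nat.cast_zero, indicator_apply, Pi.one_apply]
  simp_rw [hcard]
  rw [integral_finsetSum _ fun i _ ↦ (integrable_const 1).indicator (hS i)]
  simp_rw [integral_indicator_one (hS _)]

/-- The expected number of silhouette edges of a polyhedron, for a viewpoint chosen
uniformly at random at infinity (i.e. averaging over the unit sphere of directions with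
the normalized spherical measure `σ / (4π)`), equals `(1/π) · Σ_e θ_e` where
`θ_e = arccos ⟨a e, b e⟩` is the exterior dihedral angle of edge `e` with adjacent
outward face normals `a e` and `b e`. -/
theorem expected_silhouette_size {I : Type*} [Fintype I]
    (a b : I → EuclideanSpace ℝ (Fin 3))
    (ha : ∀ i, ‖a i‖ = 1) (hb : ∀ i, ‖b i‖ = 1) :
    (∫ v : Metric.sphere (0 : EuclideanSpace ℝ (Fin 3)) 1,
        (Nat.card {i : I //
          ⟪(v : EuclideanSpace ℝ (Fin 3)), a i⟫ * ⟪(v : EuclideanSpace ℝ (Fin 3)), b i⟫ < 0} : ℝ)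
        ∂((ENNReal.ofReal (4 * π))⁻¹ • (volume : Measure (EuclideanSpace ℝ (Fin 3))).toSphere))
      = (1 / π) * ∑ i, Real.arccos ⟪a i, b i⟫ := by
  set μ := (ENNReal.ofReal (4 * π))⁻¹ • (volume : Measure E3).toSphere
  have : IsFiniteMeasure μ := Measure.smul_finite _ (by simp [pi_pos])
  refine (integral_natCard_mem_eq_sum μ (S := fun i ↦ {v | ⟪(v : E3), a i⟫ * ⟪(v : E3), b i⟫ < 0})
    fun i ↦ measurable_subtype_coe (measurableSet_silhouetteCone (a i) (b i))).trans ?_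
  rw [Finset.mul_sum]
  refine Finset.sum_congr rfl fun i _ ↦ ?_
  change μ.real ((↑) ⁻¹' silhouetteCone (a i) (b i)) = _
  rw [measureReal_def, Measure.smul_apply, toSphere_silhouetteCone (ha i) (hb i), smul_eq_mul,
    ENNReal.toReal_mul, ENNReal.toReal_inv, ENNReal.toReal_ofReal (by positivity),
    ENNReal.toReal_ofReal (mul_nonneg zero_le_four (arccos_nonneg _))]
  field_simp
end

section
/- Let u and m be orthonormal vectors in E (u along an edge of a triangle, m the unit normal of the plane of the triangle). Let δ ∈ [0, π/2] and let v be a unit vector such that |⟨v, u⟩| ≤ 1/2, and set w = v − ⟨v, u⟩·u (the component of v orthogonal to u). If |⟨w, m⟩| ≥ ‖w‖ · sin δ, then |⟨v, m⟩| ≥ (√3/2) · sin δ. (The sine of the angle between the viewing direction v and the plane m^⊥ is at least (√3/2)·sin δ whenever v makes an angle at least π/3 with the edge line and the plane spanned by the edge and v makes dihedral angle at least δ with the plane of the triangle.) -/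
open Real RealInnerProductSpace

/-- If a unit viewing direction `v` makes an angle at least `π/3` with the line of an edge
(direction `u`), and the plane spanned by the edge and `v` makes a dihedral angle at least
`δ` with the plane of a triangle (unit normal `m`, with `m ⊥ u`), then the sine of the
angle between `v` and that plane is at least `(√3/2)·sin δ`. -/
theorem sin_angle_with_plane_lower_bound
    (u m : EuclideanSpace ℝ (Fin 3)) (hu : ‖u‖ = 1) (hm : ‖m‖ = 1) (hum : ⟪u, m⟫ = 0)
    (δ : ℝ) (hδ : δ ∈ Set.Icc 0 (π / 2))
    (v : EuclideanSpace ℝ (Fin 3)) (hv : ‖v‖ = 1)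
    (hvu : |⟪v, u⟫| ≤ 1 / 2)
    (hw : |⟪v - ⟪v, u⟫ • u, m⟫| ≥ ‖v - ⟪v, u⟫ • u‖ * Real.sin δ) :
    |⟪v, m⟫| ≥ (Real.sqrt 3 / 2) * Real.sin δ := by
  have hwm : ⟪v - ⟪v, u⟫ • u, m⟫ = ⟪v, m⟫ := by
    rw [inner_sub_left, real_inner_smul_left, hum, mul_zero, sub_zero]
  have hnsq : ‖v - ⟪v, u⟫ • u‖ ^ 2 = 1 - ⟪v, u⟫ ^ 2 := by
    rw [norm_sub_sq_real, real_inner_smul_right, norm_smul]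
    simp [hu, hv, real_inner_self_eq_norm_sq]
    ring
  have h34 : (Real.sqrt 3 / 2) ^ 2 ≤ ‖v - ⟪v, u⟫ • u‖ ^ 2 := by
    rw [hnsq, div_pow, sq_sqrt (by norm_num : (3:ℝ) ≥ 0)]
    have := abs_le.mp hvu
    nlinarith [this.1, this.2]
  have hle : Real.sqrt 3 / 2 ≤ ‖v - ⟪v, u⟫ • u‖ := by
    have := Real.sqrt_le_sqrt (le_of_eq (Real.sq_sqrt (by positivity : (0:ℝ) ≤ 3)).symm)
    nlinarith [Real.sqrt_nonneg 3, norm_nonneg (v - ⟪v, u⟫ • u), h34]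
  have hsin : 0 ≤ Real.sin δ := Real.sin_nonneg_of_nonneg_of_le_pi hδ.1
    (le_trans hδ.2 (by linarith [Real.pi_pos]))
  calc (Real.sqrt 3 / 2) * Real.sin δ ≤ ‖v - ⟪v, u⟫ • u‖ * Real.sin δ := by
        exact mul_le_mul_of_nonneg_right hle hsin
    _ ≤ |⟪v - ⟪v, u⟫ • u, m⟫| := hw
    _ = |⟪v, m⟫| := by rw [hwm]
end

section
/- Let u and m be orthonormal vectors in E and let δ ∈ (0, π/2]. Then the infimum of |⟨v, m⟩| over all unit vectors v satisfying |⟨v, u⟩| ≤ 1/2 and |⟨w, m⟩| ≥ ‖w‖ · sin δ, where w = v − ⟨v, u⟩·u, is exactly (√3/2) · sin δ, and this infimum is attained. (This is Lemma 3: sin Γ = (√3/2)·sin(C/(2√n)), where Γ is the smallest angle a direction of the set Ω can make with the plane of an adjacent triangle and δ = C/(2√n).) -/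
open Real RealInnerProductSpace

set_option maxHeartbeats 1000000 in
/-- Lemma 3 of the paper: `sin Γ = (√3/2)·sin δ`, where `Γ` is the smallest angle a
direction of the set `Ω` can make with the plane of an adjacent triangle (unit normal `m`)
and `δ = C/(2√n)`. Formally: the infimum of `|⟨v, m⟩|` (the sine of the angle between the
unit direction `v` and the plane `m^⊥`) over all unit vectors `v` making angle at least
`π/3` with the edge line (direction `u`) and whose plane spanned with `u` makes a dihedral
angle at least `δ` with `m^⊥`, is exactly `(√3/2)·sin δ`, and it is attained. -/
theorem sin_angle_with_plane_isLeast
    (u m : EuclideanSpace ℝ (Fin 3)) (hu : ‖u‖ = 1) (hm : ‖m‖ = 1) (hum : ⟪u, m⟫ = 0)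
    (δ : ℝ) (hδ : δ ∈ Set.Ioc 0 (π / 2)) :
    IsLeast
      {r : ℝ | ∃ v : EuclideanSpace ℝ (Fin 3), ‖v‖ = 1 ∧ |⟪v, u⟫| ≤ 1 / 2 ∧
        |⟪v - ⟪v, u⟫ • u, m⟫| ≥ ‖v - ⟪v, u⟫ • u‖ * Real.sin δ ∧ r = |⟪v, m⟫|}
      ((Real.sqrt 3 / 2) * Real.sin δ) := by
  obtain ⟨hδ0, hδ2⟩ := hδ
  have hsin : 0 < Real.sin δ :=
    Real.sin_pos_of_pos_of_lt_pi hδ0 (lt_of_le_of_lt hδ2 (by linarith [Real.pi_pos]))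
  have hsqrt34 : Real.sqrt (3/4) = Real.sqrt 3 / 2 := by
    rw [show (3/4 : ℝ) = (Real.sqrt 3 / 2)^2 by
      rw [div_pow, Real.sq_sqrt (by norm_num : (3:ℝ) ≥ 0)]; norm_num]
    exact Real.sqrt_sq (by positivity)
  have huu : ⟪u, u⟫ = (1:ℝ) := by
    rw [real_inner_self_eq_norm_sq, hu]; norm_num
  have hmm : ⟪m, m⟫ = (1:ℝ) := by
    rw [real_inner_self_eq_norm_sq, hm]; norm_num
  have hmu : ⟪m, u⟫ = (0:ℝ) := by rw [real_inner_comm]; exact hum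
  constructor
  · -- attainment
    obtain ⟨e, he, heu, hem⟩ : ∃ e : EuclideanSpace ℝ (Fin 3), ‖e‖ = 1 ∧ ⟪e, u⟫ = 0 ∧ ⟪e, m⟫ = 0 := by
      classical
      set K := Submodule.span ℝ {u, m} with hKdef
      have hK : Module.finrank ℝ K < 3 := by
        have h1 : Module.finrank ℝ K ≤ ({u, m} : Set (EuclideanSpace ℝ (Fin 3))).toFinset.card :=
          finrank_span_le_card _
        have h2 : (({u, m} : Set (EuclideanSpace ℝ (Fin 3))).toFinset).card ≤ 2 := by
          rw [Set.toFinset_insert, Set.toFinset_singleton]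
          exact (Finset.card_insert_le _ _).trans (by simp)
        omega
      have hKbot : Kᗮ ≠ ⊥ := by
        intro h
        rw [Submodule.orthogonal_eq_bot_iff] at h
        have h3 : Module.finrank ℝ (EuclideanSpace ℝ (Fin 3)) = 3 := by
          simp [finrank_euclideanSpace]
        rw [h, finrank_top] at hK
        omega
      obtain ⟨x, hx, hx0⟩ := Submodule.exists_mem_ne_zero_of_ne_bot hKbot
      refine ⟨‖x‖⁻¹ • x, ?_, ?_, ?_⟩
      · simp [norm_smul, norm_ne_zero_iff.2 hx0, inv_mul_cancel₀]
      · rw [real_inner_smul_left]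
        have := hx u (Submodule.subset_span (by simp))
        rw [real_inner_comm] at this; simp [this]
      · rw [real_inner_smul_left]
        have := hx m (Submodule.subset_span (by simp))
        rw [real_inner_comm] at this; simp [this]

    have hee : ⟪e, e⟫ = (1:ℝ) := by
      rw [real_inner_self_eq_norm_sq, he]; norm_num
    have hue : ⟪u, e⟫ = (0:ℝ) := by rw [real_inner_comm]; exact heu
    have hme : ⟪m, e⟫ = (0:ℝ) := by rw [real_inner_comm]; exact hem
    obtain ⟨b, hb⟩ : ∃ b : ℝ, b = Real.sqrt 3 / 2 * Real.cos δ := ⟨_, rfl⟩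
    obtain ⟨c, hc⟩ : ∃ c : ℝ, c = Real.sqrt 3 / 2 * Real.sin δ := ⟨_, rfl⟩
    obtain ⟨v, hvdef⟩ : ∃ v : EuclideanSpace ℝ (Fin 3),
        v = (1/2 : ℝ) • u + b • e + c • m := ⟨_, rfl⟩
    have h1 : ⟪v, u⟫ = (1/2 : ℝ) := by
      simp only [hvdef, inner_add_left, real_inner_smul_left, huu, heu, hmu,
        mul_one, mul_zero, add_zero]
    have h3 : ⟪v, m⟫ = c := by
      simp only [hvdef, inner_add_left, real_inner_smul_left, hum, hem, hmm,
        mul_one, mul_zero, add_zero, zero_add]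
    refine ⟨v, ?_, ?_, ?_, ?_⟩
    · have hvv : ⟪v, v⟫ = (1:ℝ) := by
        simp only [hvdef, inner_add_left, inner_add_right, real_inner_smul_left,
          real_inner_smul_right, huu, hmm, hee, hue, heu, hum, hmu, hem, hme,
          mul_one, mul_zero, add_zero, zero_add]
        rw [hb, hc]
        nlinarith [Real.sin_sq_add_cos_sq δ, Real.sq_sqrt (show (3:ℝ) ≥ 0 by norm_num)]
      rw [norm_eq_sqrt_real_inner, hvv, Real.sqrt_one]
    · rw [h1]; rw [abs_of_pos]; norm_num
    · rw [h1]
      have h2 : v - (1/2 : ℝ) • u = b • e + c • m := by rw [hvdef]; abel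
      rw [h2]
      have h3' : ⟪b • e + c • m, m⟫ = c := by
        simp only [inner_add_left, real_inner_smul_left, hem, hmm,
          mul_one, mul_zero, zero_add]
      rw [h3']
      have h5 : ⟪b • e + c • m, b • e + c • m⟫ = (3/4:ℝ) := by
        simp only [inner_add_left, inner_add_right, real_inner_smul_left,
          real_inner_smul_right, hee, hmm, hem, hme, mul_one, mul_zero, add_zero, zero_add]
        rw [hb, hc]
        nlinarith [Real.sin_sq_add_cos_sq δ, Real.sq_sqrt (show (3:ℝ) ≥ 0 by norm_num)]
      have h4 : ‖b • e + c • m‖ = Real.sqrt 3 / 2 := by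
        rw [norm_eq_sqrt_real_inner, h5, hsqrt34]
      rw [h4, hc, abs_of_pos (by positivity)]
    · rw [h3, hc, abs_of_pos (by positivity)]
  · -- lower bound
    rintro r ⟨v, hv, hvu, hwm, rfl⟩
    have hvm : ⟪v - ⟪v, u⟫ • u, m⟫ = ⟪v, m⟫ := by
      simp only [inner_sub_left, real_inner_smul_left, hum, mul_zero, sub_zero]
    rw [hvm] at hwm
    have hvv : ⟪v, v⟫ = (1:ℝ) := by rw [real_inner_self_eq_norm_sq, hv]; norm_num
    have hw2 : ‖v - ⟪v, u⟫ • u‖ ^ 2 = 1 - ⟪v, u⟫ ^ 2 := by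
      rw [← real_inner_self_eq_norm_sq]
      simp only [inner_sub_left, inner_sub_right, real_inner_smul_left,
        real_inner_smul_right, huu, hvv, real_inner_comm u v, mul_one]
      ring
    have hvu2 : ⟪v, u⟫ ^ 2 ≤ 1/4 := by
      nlinarith [abs_nonneg ⟪v, u⟫, sq_abs ⟪v, u⟫, abs_le.mp hvu]
    have hwge : Real.sqrt 3 / 2 ≤ ‖v - ⟪v, u⟫ • u‖ := by
      have h34 : (3/4 : ℝ) ≤ ‖v - ⟪v, u⟫ • u‖ ^ 2 := by rw [hw2]; linarith
      calc Real.sqrt 3 / 2 = Real.sqrt (3/4) := hsqrt34.symm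
        _ ≤ Real.sqrt (‖v - ⟪v, u⟫ • u‖ ^ 2) := Real.sqrt_le_sqrt h34
        _ = ‖v - ⟪v, u⟫ • u‖ := Real.sqrt_sq (norm_nonneg _)
    calc Real.sqrt 3 / 2 * Real.sin δ ≤ ‖v - ⟪v, u⟫ • u‖ * Real.sin δ :=
          mul_le_mul_of_nonneg_right hwge hsin.le
      _ ≤ |⟪v, m⟫| := hwm
end

section
/- Let β > 0, let n be a positive natural number, let h > 0, and set C = 31.3·β and χ = β·h/√n. Assume C/(2√n) < π/2. Then h/4 > (1 + 2/√3) · χ / ((√3/2) · sin(C/(2√n))). (This is Lemma 4: h_i/4 > (1 + 2/√3)·χ_i/ sin Γ with sin Γ = (√3/2)·sin(C/(2√n)) and C = 31.3β, where h_i is the smallest height of the triangle T_i and χ_i = β h_i/√n.) -/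
open Real

/-- Lemma 4 of the paper: with `C = 31.3·β` and `χ = β·h/√n`, one has
`h/4 > (1 + 2/√3) · χ / sin Γ`, where `sin Γ = (√3/2)·sin(C/(2√n))`. -/
theorem height_gt_bound (β : ℝ) (hβ : 0 < β) (n : ℕ) (hn : 0 < n) (h : ℝ) (hh : 0 < h)
    (hC : (31.3 * β) / (2 * Real.sqrt n) < π / 2) :
    h / 4 > (1 + 2 / Real.sqrt 3) * (β * h / Real.sqrt n) /
      ((Real.sqrt 3 / 2) * Real.sin ((31.3 * β) / (2 * Real.sqrt n))) := by
  have hs0 : 0 < Real.sqrt n := Real.sqrt_pos.mpr (by positivity)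
  set s := Real.sqrt n with hs
  set x := 31.3 * β / (2 * s) with hxdef
  have hπ0 : 0 < π := Real.pi_pos
  have hx0 : 0 < x := by positivity
  have hsin : 2 / π * x ≤ Real.sin x := Real.mul_le_sin hx0.le hC.le
  have hsinpos : 0 < Real.sin x :=
    Real.sin_pos_of_pos_of_lt_pi hx0 (hC.trans (by linarith))
  have h3 : (0:ℝ) < Real.sqrt 3 := by positivity
  have h3sq : Real.sqrt 3 ^ 2 = 3 := Real.sq_sqrt (by norm_num)
  have h3lt : Real.sqrt 3 < 1.7320509 := by nlinarith
  have h3gt : (1.7320507:ℝ) < Real.sqrt 3 := by nlinarith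
  have hπ : π < 3.1416 := by linarith [Real.pi_lt_d6]
  have hβs : β * h / s = 2 * x * h / 31.3 := by
    rw [hxdef]; field_simp
  rw [gt_iff_lt, div_lt_iff₀ (by positivity), hβs]
  have key : (1 + 2 / Real.sqrt 3) * (2 * x * h / 31.3) <
      h / 4 * (Real.sqrt 3 / 2 * (2 / π * x)) := by
    have e1 : (1 + 2 / Real.sqrt 3) * (2 * x * h / 31.3) =
        ((Real.sqrt 3 + 2) * (2 * x * h)) / (31.3 * Real.sqrt 3) := by
      field_simp
    have e2 : h / 4 * (Real.sqrt 3 / 2 * (2 / π * x)) =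
        (Real.sqrt 3 * x * h) / (4 * π) := by
      field_simp
    rw [e1, e2, div_lt_div_iff₀ (by positivity) (by positivity)]
    have hnum : 8 * π * (Real.sqrt 3 + 2) < 93.9 := by nlinarith
    nlinarith [mul_pos hx0 hh, mul_pos (mul_pos hx0 hh) hπ0]
  calc (1 + 2 / Real.sqrt 3) * (2 * x * h / 31.3)
      < h / 4 * (Real.sqrt 3 / 2 * (2 / π * x)) := key
    _ ≤ h / 4 * (Real.sqrt 3 / 2 * Real.sin x) := by
        gcongr
end

section
/- Let β > 0, let n be a positive natural number, and let C be a real number with C ≥ (8/3)·(2 + √3)·π·β. Assume 0 < C/(2√n) < π/2. Then 4·β·(1 + 2/√3) < √n · (√3/2) · sin(C/(2√n)). (This is the sufficient condition on C, derived via Jordan's inequality sin x > (2/π)x on (0, π/2), which establishes inequality (1) in the proof of Lemma 4; since (8/3)(2+√3)π ≈ 31.27, the choice C = 31.3β works.) -/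
open Real

/-- The sufficient condition on `C` establishing inequality (1) in the proof of Lemma 4:
if `C ≥ (8/3)·(2+√3)·π·β` and `0 < C/(2√n) < π/2`, then
`4·β·(1 + 2/√3) < √n · (√3/2) · sin(C/(2√n))`. -/
theorem sufficient_condition_on_C (β : ℝ) (hβ : 0 < β) (n : ℕ) (hn : 0 < n) (C : ℝ)
    (hC : C ≥ (8 / 3) * (2 + Real.sqrt 3) * π * β)
    (h1 : 0 < C / (2 * Real.sqrt n)) (h2 : C / (2 * Real.sqrt n) < π / 2) :
    4 * β * (1 + 2 / Real.sqrt 3) <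
      Real.sqrt n * (Real.sqrt 3 / 2) * Real.sin (C / (2 * Real.sqrt n)) := by
  have hs := Real.mul_lt_sin h1 h2
  have hn' : (0:ℝ) < Real.sqrt n := Real.sqrt_pos.2 (by exact_mod_cast hn)
  have h3 : (0:ℝ) < Real.sqrt 3 := Real.sqrt_pos.2 (by norm_num)
  have h3sq : Real.sqrt 3 * Real.sqrt 3 = 3 := Real.mul_self_sqrt (by norm_num)
  have hpi : (0:ℝ) < π := Real.pi_pos
  have key : Real.sqrt n * (Real.sqrt 3 / 2) * (2 / π * (C / (2 * Real.sqrt n)))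
      = Real.sqrt 3 * C / (2 * π) := by
    field_simp
  have step : 4 * β * (1 + 2 / Real.sqrt 3) ≤
      Real.sqrt n * (Real.sqrt 3 / 2) * (2 / π * (C / (2 * Real.sqrt n))) := by
    rw [key]
    have h23 : 2 / Real.sqrt 3 = 2 * Real.sqrt 3 / 3 := by
      rw [div_eq_div_iff h3.ne' (by norm_num)]; nlinarith
    rw [h23, le_div_iff₀ (by positivity)]
    nlinarith [mul_le_mul_of_nonneg_left hC (le_of_lt h3), mul_pos hpi hβ]
  calc 4 * β * (1 + 2 / Real.sqrt 3)
      ≤ Real.sqrt n * (Real.sqrt 3 / 2) * (2 / π * (C / (2 * Real.sqrt n))) := step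
    _ < _ := by
        apply mul_lt_mul_of_pos_left hs
        positivity
end

section
/- Let p₁, p₂, p₃ be affinely independent points of the Euclidean plane E₂, let T be their convex hull, and let χ > 0. Let P be a point of T with dist(P, x) ≥ χ for every x in the frontier ∂T of T. Let g : E₂ → E₂ be a map that is continuous on T and satisfies dist(x, g(x)) < χ for every x ∈ T. Then P belongs to the image g(T). (This is the topological core of the proof of Lemma 2: the point P = p(D⁻) lies in g_n(p(T_i)) = p(f_n(T_i)), proved by a homotopy/contraction argument.) -/
/-!
Suppose `P ∉ g '' T`. The closed disc of radius `χ` about `P` lies in `T`, so in a complex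
coordinate centred at `P` the displacement `v = g - P` has no zero on that disc, and since the
disc is simply connected, `v = exp ∘ L` with `L` continuous. On the boundary circle `γ` the loop
`L ∘ γ` closes up. But `|v - z| < |z|` there, so `v ∘ γ = γ · w` with `w` in the disc
`ball 1 1`, and `log χ + 2πit + log w(t)` is another continuous logarithm of `v ∘ γ`, one
that increases by `2πi` over the loop. Two continuous logarithms of the same function differ
by a constant, which is a contradiction.
-/

open Complex Metric Set Module

theorem Convex.exists_continuousOn_exp_eq {E : Type*} [AddCommGroup E] [Module ℝ E]
    [TopologicalSpace E] [IsTopologicalAddGroup E] [ContinuousSMul ℝ E]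
    [LocallyConvexSpace ℝ E]
    {s : Set E} (hs : Convex ℝ s) {f : E → ℂ} (hf : ContinuousOn f s)
    (hf₀ : ∀ x ∈ s, f x ≠ 0) : ∃ L : E → ℂ, ContinuousOn L s ∧ ∀ x ∈ s, exp (L x) = f x := by
  rcases s.eq_empty_or_nonempty with rfl | ⟨x₀, hx₀⟩
  · exact ⟨0, continuousOn_empty _, fun _ h => h.elim⟩
  have := hs.contractibleSpace ⟨x₀, hx₀⟩
  have := hs.locallyPathConnectedSpace
  obtain ⟨F, ⟨-, hF⟩, -⟩ := isCoveringMapOn_exp.existsUnique_continuousMap_lifts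
    ⟨s.domRestrict f, hf.domRestrict⟩ (a₀ := ⟨x₀, hx₀⟩) (exp_log (hf₀ x₀ hx₀))
    fun x => hf₀ x x.2
  have hextend (x : s) : Function.extend Subtype.val F 0 x = F x :=
    Subtype.val_injective.extend_apply F 0 x
  refine ⟨Function.extend Subtype.val F 0, ?_, fun x hx => ?_⟩
  · rw [continuousOn_iff_continuous_domRestrict]
    convert F.continuous using 1
    exact funext hextend
  · rw [hextend ⟨x, hx⟩]
    exact congrFun hF ⟨x, hx⟩

theorem IsPreconnected.sub_eq_sub_of_exp_eq {X : Type*} [TopologicalSpace X] {s : Set X}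
    (hs : IsPreconnected s) {f g : X → ℂ} (hf : ContinuousOn f s) (hg : ContinuousOn g s)
    (hfg : ∀ x ∈ s, exp (f x) = exp (g x)) {x y : X} (hx : x ∈ s) (hy : y ∈ s) :
    f y - g y = f x - g x := by
  have hshift : ∀ z ∈ s, exp (g z + (f x - g x)) = exp (f z) := fun z hz => by
    rw [exp_add, exp_sub, hfg x hx, div_self (exp_ne_zero _), mul_one, hfg z hz]
  have := isCoveringMap_exp.eqOn_of_comp_eqOn (g₂ := fun z => g z + (f x - g x)) hs hf
    (hg.add continuousOn_const)
    (fun z hz => Subtype.ext (hshift z hz).symm) hx (by ring) hy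
  linear_combination this

theorem exists_mem_closedBall_eq_zero_of_norm_sub_lt {v : ℂ → ℂ} {r : ℝ} (hr : 0 < r)
    (hv : ContinuousOn v (closedBall 0 r)) (hvr : ∀ z ∈ sphere (0 : ℂ) r, ‖v z - z‖ < r) :
    ∃ z ∈ closedBall (0 : ℂ) r, v z = 0 := by
  by_contra! hv₀
  obtain ⟨L, hLc, hL⟩ := (convex_closedBall (0 : ℂ) r).exists_continuousOn_exp_eq hv hv₀
  set γ : ℝ → ℂ := fun t => r * exp (↑(2 * Real.pi * t) * I)
  have hγ (t : ℝ) : γ t ∈ sphere 0 r := by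
    rw [mem_sphere_zero_iff_norm, norm_mul, norm_exp_ofReal_mul_I, norm_real,
      Real.norm_of_nonneg hr.le, mul_one]
  have hγ₀ (t : ℝ) : γ t ≠ 0 :=
    norm_ne_zero_iff.1 (by rw [mem_sphere_zero_iff_norm.1 (hγ t)]; exact hr.ne')
  have hγc : Continuous γ := by fun_prop
  set w : ℝ → ℂ := fun t => v (γ t) / γ t
  have hw (t : ℝ) : w t ∈ ball 1 1 := by
    rw [mem_ball, dist_eq_norm, div_sub_one (hγ₀ t), norm_div,
      mem_sphere_zero_iff_norm.1 (hγ t), div_lt_one hr]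
    exact hvr _ (hγ t)
  have hw_periodic : w 1 = w 0 := by simp [w, γ]
  have hwc : ContinuousOn (fun t => log (w t)) univ :=
    ((hv.comp hγc.continuousOn fun t _ => sphere_subset_closedBall (hγ t)).div hγc.continuousOn
      fun t _ => hγ₀ t).clog fun t _ => ball_one_subset_slitPlane (hw t)
  have hexp (t : ℝ) : exp (L (γ t)) = exp (log r + ↑(2 * Real.pi * t) * I + log (w t)) := by
    rw [hL _ (sphere_subset_closedBall (hγ t)), exp_add, exp_add,
      exp_log (ofReal_ne_zero.2 hr.ne'),
      exp_log (slitPlane_ne_zero (ball_one_subset_slitPlane (hw t))), mul_div_cancel₀ _ (hγ₀ t)]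
  have hconst := isPreconnected_univ.sub_eq_sub_of_exp_eq (f := fun t => L (γ t))
    (g := fun t => log r + ↑(2 * Real.pi * t) * I + log (w t))
    (hLc.comp hγc.continuousOn fun t _ => sphere_subset_closedBall (hγ t))
    ((continuousOn_const.add (by fun_prop)).add hwc) (fun t _ => hexp t)
    (mem_univ 0) (mem_univ 1)
  rw [hw_periodic, show γ 1 = γ 0 by simp [γ]] at hconst
  exact two_pi_I_ne_zero (by push_cast at hconst; linear_combination -hconst)

theorem mem_image_closedBall_of_dist_lt {E : Type*} [NormedAddCommGroup E]
    [InnerProductSpace ℝ E] (hE : finrank ℝ E = 2) {g : E → E} {P : E} {r : ℝ} (hr : 0 < r)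
    (hg : ContinuousOn g (closedBall P r)) (hgr : ∀ x ∈ sphere P r, dist (g x) x < r) :
    P ∈ g '' closedBall P r := by
  have := Module.finite_of_finrank_eq_succ hE
  let ι := isometryOfOrthonormal ((stdOrthonormalBasis ℝ E).reindex (finCongr hE))
  have hball (z : ℂ) : P + ι z ∈ closedBall P r ↔ z ∈ closedBall 0 r := by simp
  have hsphere (z : ℂ) : P + ι z ∈ sphere P r ↔ z ∈ sphere 0 r := by simp
  have hdisp (z : ℂ) :
      ι.symm (g (P + ι z) - P) - z = ι.symm (g (P + ι z) - (P + ι z)) := by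
    rw [map_sub, map_sub, map_add, ι.symm_apply_apply, sub_sub]
  obtain ⟨z, hz, hvz⟩ := exists_mem_closedBall_eq_zero_of_norm_sub_lt
    (v := fun z => ι.symm (g (P + ι z) - P)) hr
    (ι.symm.continuous.comp_continuousOn <|
      (hg.comp (by fun_prop) fun z hz => (hball z).2 hz).sub continuousOn_const)
    fun z hz => by
      rw [hdisp, ι.symm.norm_map, ← dist_eq_norm]
      exact hgr _ ((hsphere z).2 hz)
  exact ⟨P + ι z, (hball z).2 hz, by simpa [sub_eq_zero] using hvz⟩

theorem IsCompact.closedBall_subset_of_le_dist_frontier {E : Type*} [NormedAddCommGroup E]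
    [NormedSpace ℝ E] [Nontrivial E] {K : Set E} (hK : IsCompact K) {P : E} (hP : P ∈ K) {r : ℝ}
    (h : ∀ x ∈ frontier K, r ≤ dist P x) : closedBall P r ⊆ K := by
  obtain ⟨y, hy, hdist⟩ := hK.exists_mem_frontier_infDist_compl_eq_dist hP
  calc closedBall P r ⊆ closedBall P (infDist P Kᶜ) :=
        closedBall_subset_closedBall (hdist ▸ h y hy)
    _ ⊆ closure K := closedBall_infDist_compl_subset_closure hP
    _ = K := hK.isClosed.closure_eq

theorem point_mem_image_of_small_perturbation_general
    (p₁ p₂ p₃ : EuclideanSpace ℝ (Fin 2))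
    (T : Set (EuclideanSpace ℝ (Fin 2)))
    (hT : T = convexHull ℝ {p₁, p₂, p₃})
    (χ : ℝ) (hχ : 0 < χ)
    (P : EuclideanSpace ℝ (Fin 2)) (hPT : P ∈ T)
    (hP : ∀ x ∈ frontier T, χ ≤ dist P x)
    (g : EuclideanSpace ℝ (Fin 2) → EuclideanSpace ℝ (Fin 2))
    (hg : ContinuousOn g T)
    (hgd : ∀ x ∈ T, dist x (g x) < χ) :
    P ∈ g '' T := by
  have hTc : IsCompact T := hT ▸ (toFinite _).isCompact_convexHull ℝ
  have hball : closedBall P χ ⊆ T := hTc.closedBall_subset_of_le_dist_frontier hPT hP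
  refine image_mono hball (mem_image_closedBall_of_dist_lt finrank_euclideanSpace_fin hχ
    (hg.mono hball) fun x hx => ?_)
  rw [dist_comm]
  exact hgd x (hball (sphere_subset_closedBall hx))

/-- Topological core of the proof of Lemma 2: if `P` is a point of the triangle `T` at
distance at least `χ > 0` from every point of its frontier, and `g` is continuous on `T`
and moves every point of `T` by less than `χ`, then `P` lies in the image `g(T)`. -/
theorem point_mem_image_of_small_perturbation
    (p₁ p₂ p₃ : EuclideanSpace ℝ (Fin 2))
    (hind : AffineIndependent ℝ ![p₁, p₂, p₃])
    (T : Set (EuclideanSpace ℝ (Fin 2)))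
    (hT : T = convexHull ℝ {p₁, p₂, p₃})
    (χ : ℝ) (hχ : 0 < χ)
    (P : EuclideanSpace ℝ (Fin 2)) (hPT : P ∈ T)
    (hP : ∀ x ∈ frontier T, χ ≤ dist P x)
    (g : EuclideanSpace ℝ (Fin 2) → EuclideanSpace ℝ (Fin 2))
    (hg : ContinuousOn g T)
    (hgd : ∀ x ∈ T, dist x (g x) < χ) :
    P ∈ g '' T :=
  point_mem_image_of_small_perturbation_general p₁ p₂ p₃ T hT χ hχ P hPT hP g hg hgd
end

section
/- Let p₁, p₂, p₃ be affinely independent points of the Euclidean plane E₂, let T be their convex hull, and let P be a point in the interior of T. Then the inclusion map of the frontier ∂T into E₂ \ {P} is not nullhomotopic, i.e., it cannot be contracted to a constant map within E₂ \ {P}. (This is the claim, used in the proof of Lemma 2, that there is no contraction of the boundary curve p(∂T_i) in ℝ² \ {P} when P lies inside the triangle p(T_i).) -/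
/-!
A bounded convex body with an interior point `P` is carried onto the closed unit disc of `ℂ` by a
homeomorphism of the plane, with `∂T` going to the unit circle and `P` to some `Q` with `‖Q‖ < 1`.
A nullhomotopic map into `ℂ \ {0}` lifts through the covering map `exp`, so a contraction of `∂T`
in the plane minus `P` would give a continuous logarithm of `z - Q`, hence of `z`, on the unit
circle; following such a logarithm once around the circle contradicts `exp (2πi) = 1`.
-/

open Complex Metric Set

theorem ContinuousMap.Nullhomotopic.exists_exp_eq {X : Type*} [TopologicalSpace X]
    {f : C(X, {z : ℂ // z ≠ 0})} (hf : f.Nullhomotopic) :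
    ∃ g : C(X, ℂ), ∀ x, exp (g x) = f x := by
  obtain ⟨c, ⟨H⟩⟩ := hf
  have h₀ : ∀ x, H.symm.toContinuousMap (0, x) =
      ⟨exp (ContinuousMap.const X (log c) x), exp_ne_zero _⟩ := fun x ↦ by
    simp [exp_log c.2]
  let G := isCoveringMap_exp.liftHomotopy H.symm.toContinuousMap (.const X (log c)) h₀
  refine ⟨G.comp (.prodMk (.const X 1) (.id X)), fun x ↦ ?_⟩
  have := congr_fun (isCoveringMap_exp.liftHomotopy_lifts _ _ h₀) (1, x)
  simpa [G] using congr_arg Subtype.val this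

theorem not_exists_exp_eq_on_sphere :
    ¬ ∃ g : C(sphere (0 : ℂ) 1, ℂ), ∀ z, exp (g z) = z := by
  rintro ⟨g, hg⟩
  let w : C(ℝ, sphere (0 : ℂ) 1) :=
    ⟨fun t ↦ ⟨exp (t * I), by simp⟩, by fun_prop⟩
  -- `t ↦ g (exp (t i)) - t i` lifts the constant map `1` through `exp`, so it is constant.
  have hconst := isCoveringMap_exp.const_of_comp (g := fun t : ℝ ↦ g (w t) - t * I)
    (by fun_prop) (fun t t' ↦ by simp [exp_sub, hg, w]) 0 (2 * Real.pi)
  have hw : w (2 * Real.pi) = w 0 := Subtype.ext <| by simp [w, exp_two_pi_mul_I]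
  simp only [hw, ofReal_zero, zero_mul, sub_zero, ofReal_mul, ofReal_ofNat] at hconst
  have : 2 * (Real.pi : ℂ) * I = 0 := by linear_combination hconst
  simp [Real.pi_ne_zero, I_ne_zero] at this

theorem not_exists_exp_eq_sub_on_sphere {Q : ℂ} (hQ : Q ∈ ball (0 : ℂ) 1) :
    ¬ ∃ g : C(sphere (0 : ℂ) 1, ℂ), ∀ z, exp (g z) = z - Q := by
  rintro ⟨g, hg⟩
  have hz₀ (z : sphere (0 : ℂ) 1) : (z : ℂ) ≠ 0 := ne_zero_of_mem_unit_sphere z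
  -- `z - Q = z (1 - Q / z)` with `‖Q / z‖ < 1`, so `log (1 - Q / z)` is continuous in `z`.
  have hslit (z : sphere (0 : ℂ) 1) : 1 - Q / z ∈ slitPlane := by
    rw [sub_eq_add_neg]
    refine mem_slitPlane_of_norm_lt_one ?_
    simpa [norm_div, norm_eq_of_mem_sphere z] using hQ
  refine not_exists_exp_eq_on_sphere
    ⟨⟨fun z ↦ g z - log (1 - Q / z), g.continuous.sub ?_⟩, fun z ↦ ?_⟩
  · exact (continuous_const.sub (continuous_const.div continuous_subtype_val hz₀)).clog hslit
  · rw [ContinuousMap.coe_mk, exp_sub, hg, exp_log (slitPlane_ne_zero (hslit z)),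
      div_eq_iff (slitPlane_ne_zero (hslit z)), mul_sub, mul_one, mul_div_cancel₀ _ (hz₀ z)]

theorem Convex.exists_homeomorph_image_interior_frontier_eq_ball_sphere
    {E F : Type*} [NormedAddCommGroup E] [NormedSpace ℝ E] [NormedAddCommGroup F]
    [NormedSpace ℝ F] (L : E ≃ₗᵢ[ℝ] F) {s : Set E} (hc : Convex ℝ s)
    (hne : (interior s).Nonempty) (hb : Bornology.IsBounded s) :
    ∃ Φ : E ≃ₜ F, Φ '' interior s = ball 0 1 ∧ Φ '' frontier s = sphere 0 1 := by
  obtain ⟨h, hint, -, hfr⟩ :=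
    exists_homeomorph_image_interior_closure_frontier_eq_unitBall hc hne hb
  have hΦ : ⇑(h.trans L.toHomeomorph) = L ∘ h := rfl
  refine ⟨h.trans L.toHomeomorph, ?_, ?_⟩
  · rw [hΦ, image_comp, hint, L.image_ball, map_zero]
  · rw [hΦ, image_comp, hfr, L.image_sphere, map_zero]

theorem frontier_inclusion_not_nullhomotopic_general
    (p₁ p₂ p₃ : EuclideanSpace ℝ (Fin 2))
    (T : Set (EuclideanSpace ℝ (Fin 2)))
    (hT : T = convexHull ℝ {p₁, p₂, p₃})
    (P : EuclideanSpace ℝ (Fin 2)) (hP : P ∈ interior T)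
    (ι : C(↥(frontier T), ↥({P}ᶜ : Set (EuclideanSpace ℝ (Fin 2)))))
    (hι : ∀ x : ↥(frontier T), (ι x : EuclideanSpace ℝ (Fin 2)) = (x : EuclideanSpace ℝ (Fin 2))) :
    ¬ ι.Nullhomotopic := by
  intro hnull
  have hTc : Convex ℝ T := hT ▸ convex_convexHull ℝ _
  have hTb : Bornology.IsBounded T := hT ▸ isBounded_convexHull.2 (toFinite _).isBounded
  obtain ⟨Φ, hint, hfr⟩ := hTc.exists_homeomorph_image_interior_frontier_eq_ball_sphere
    Complex.orthonormalBasisOneI.repr.symm ⟨P, hP⟩ hTb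
  let σ : C(sphere (0 : ℂ) 1, frontier T) :=
    ⟨fun z ↦ ⟨Φ.symm z, by simpa [← hfr, Φ.image_eq_preimage_symm] using z.2⟩, by fun_prop⟩
  let ψ : C(({P}ᶜ : Set (EuclideanSpace ℝ (Fin 2))), {z : ℂ // z ≠ 0}) :=
    ⟨fun x ↦ ⟨Φ x - Φ P, sub_ne_zero.2 (Φ.injective.ne x.2)⟩, by fun_prop⟩
  obtain ⟨g, hg⟩ := ((hnull.comp_right ψ).comp_left σ).exists_exp_eq
  exact not_exists_exp_eq_sub_on_sphere (hint ▸ mem_image_of_mem Φ hP)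
    ⟨g, fun z ↦ by simp [hg, σ, ψ, hι]⟩

/-- The claim in the proof of Lemma 2 that the boundary of a triangle cannot be
contracted in the plane minus an interior point: if `P` lies in the interior of the
triangle `T`, then the inclusion map of the frontier `∂T` into `E₂ \ {P}` is not
nullhomotopic. -/
theorem frontier_inclusion_not_nullhomotopic
    (p₁ p₂ p₃ : EuclideanSpace ℝ (Fin 2))
    (hind : AffineIndependent ℝ ![p₁, p₂, p₃])
    (T : Set (EuclideanSpace ℝ (Fin 2)))
    (hT : T = convexHull ℝ {p₁, p₂, p₃})
    (P : EuclideanSpace ℝ (Fin 2)) (hP : P ∈ interior T)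
    (ι : C(↥(frontier T), ↥({P}ᶜ : Set (EuclideanSpace ℝ (Fin 2)))))
    (hι : ∀ x : ↥(frontier T), (ι x : EuclideanSpace ℝ (Fin 2)) = (x : EuclideanSpace ℝ (Fin 2))) :
    ¬ ι.Nullhomotopic :=
  frontier_inclusion_not_nullhomotopic_general p₁ p₂ p₃ T hT P hP ι hι
end
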